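/- arXiv:2012.14551 — 5 statements merged into one kernel-verified Lean document; each statement's English description precedes it below -/
import Mathlib

section
/- Let G be a connected graph with at least three edges. Then the line graph L(G) is Hamiltonian if and only if G has a dominating closed trail (a closed trail such that every edge of G is incident with at least one vertex of the trail). -/
/-! A hamiltonian cycle `e₁, …, eₘ` of `L(G)` is traced in `G` by picking a common vertex of each
pair `eᵢ, eᵢ₊₁`: consecutive picks are equal or joined by the edge containing both, so the picks
form a closed walk using each `eᵢ` at most once that meets every edge. Conversely, walk along a
dominating closed trail and list, at each vertex, the not yet listed non-trail edges at it, then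
the next trail edge: every edge is listed exactly once and consecutive ones (cyclically) meet. -/

open SimpleGraph

namespace Paper

/-- A graph is traceable if it has a hamiltonian path. -/
def Traceable {α : Type*} (G : SimpleGraph α) : Prop :=
  ∃ (a b : α) (p : G.Walk a b), p.IsPath ∧ ∀ w, w ∈ p.support

/-- A graph is hamiltonian if it has a hamiltonian cycle. -/
def HamGraph {α : Type*} (G : SimpleGraph α) : Prop :=
  ∃ (a : α) (p : G.Walk a a), p.IsCycle ∧ ∀ w, w ∈ p.support

/-- A graph together with its (varying) vertex type. -/
def GraphSys : Type 1 := Σ V : Type, SimpleGraph V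

/-- One application of the line-graph operator. -/
def lineStep (p : GraphSys) : GraphSys := ⟨p.2.edgeSet, p.2.lineGraph⟩

/-- The `n`-th iterated line graph (with `L^0(G) = G`). -/
def iterLine (p : GraphSys) (n : ℕ) : GraphSys := lineStep^[n] p

/-- The hamiltonian path index: the least `n` with `L^n(G)` traceable. -/
noncomputable def hp {V : Type} (G : SimpleGraph V) : ℕ :=
  sInf {n | Traceable (iterLine ⟨V, G⟩ n).2}

/-- The hamiltonian index: the least `n` with `L^n(G)` hamiltonian. -/
noncomputable def hIndex {V : Type} (G : SimpleGraph V) : ℕ :=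
  sInf {n | HamGraph (iterLine ⟨V, G⟩ n).2}

/-- Degree of `v` in a subgraph `H` (number of neighbours). -/
noncomputable def sdeg {V : Type*} {G : SimpleGraph V} (H : G.Subgraph) (v : V) : ℕ :=
  (H.neighborSet v).ncard

/-- Degree of `v` in `G` (number of neighbours). -/
noncomputable def gdeg {V : Type*} (G : SimpleGraph V) (v : V) : ℕ :=
  (G.neighborSet v).ncard

/-- `Ē(H)`: the set of edges of `G` incident with a vertex of `H`. -/
def barE {V : Type*} (G : SimpleGraph V) (H : G.Subgraph) : Set (Sym2 V) :=
  {e | e ∈ G.edgeSet ∧ ∃ v ∈ H.verts, v ∈ e}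

/-- A circuit: a connected subgraph in which every vertex has even degree
(`K₁` counts as a circuit). -/
def IsCircuit {V : Type*} {G : SimpleGraph V} (H : G.Subgraph) : Prop :=
  H.Connected ∧ ∀ v, Even (sdeg H v)

/-- A branch of `G`: a nontrivial path whose ends have degree `≠ 2` and whose
internal vertices have degree `2`. -/
def IsBranch {V : Type*} (G : SimpleGraph V) {u v : V} (p : G.Walk u v) : Prop :=
  p.IsPath ∧ 0 < p.length ∧ gdeg G u ≠ 2 ∧ gdeg G v ≠ 2 ∧
    ∀ w ∈ p.support, w ≠ u → w ≠ v → gdeg G w = 2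

/-- The family `EUP_k(G)` of subgraphs satisfying (I'), (II), (III), (IV), (V'). -/
def EUP {V : Type*} (G : SimpleGraph V) (k : ℕ) : Set (G.Subgraph) :=
  {H | {v | Odd (sdeg H v)}.ncard ≤ 2 ∧
    (∀ v ∈ H.verts, H.neighborSet v = ∅ → 3 ≤ gdeg G v) ∧
    (∀ v, 3 ≤ gdeg G v → v ∈ H.verts) ∧
    (∀ H1 : G.Subgraph, H1 ≤ H → H1.verts.Nonempty → (H.verts \ H1.verts).Nonempty →
      ∃ a ∈ H1.verts, ∃ b ∈ H.verts \ H1.verts, G.dist a b ≤ k - 1) ∧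
    (∀ (u v : V) (p : G.Walk u v), IsBranch G p →
      (∀ e ∈ p.edges, e ∉ H.edgeSet) → p.length ≤ k + 1) ∧
    (∀ (u v : V) (p : G.Walk u v), IsBranch G p → (∃ w ∈ p.support, gdeg G w = 1) →
      (∀ e ∈ p.edges, e ∉ H.edgeSet) → p.length ≤ k)}

/-- The family `EU_k(G)` of subgraphs satisfying (I), (II), (III), (IV), (V). -/
def EU {V : Type*} (G : SimpleGraph V) (k : ℕ) : Set (G.Subgraph) :=
  {H | (∀ v, Even (sdeg H v)) ∧
    (∀ v ∈ H.verts, H.neighborSet v = ∅ → 3 ≤ gdeg G v) ∧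
    (∀ v, 3 ≤ gdeg G v → v ∈ H.verts) ∧
    (∀ H1 : G.Subgraph, H1 ≤ H → H1.verts.Nonempty → (H.verts \ H1.verts).Nonempty →
      ∃ a ∈ H1.verts, ∃ b ∈ H.verts \ H1.verts, G.dist a b ≤ k - 1) ∧
    (∀ (u v : V) (p : G.Walk u v), IsBranch G p →
      (∀ e ∈ p.edges, e ∉ H.edgeSet) → p.length ≤ k + 1) ∧
    (∀ (u v : V) (p : G.Walk u v), IsBranch G p → (∃ w ∈ p.support, gdeg G w = 1) →
      p.length ≤ k)}

end Paper

namespace List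

variable {α : Type*}

theorem IsChain.and {R S : α → α → Prop} {l : List α} (hR : l.IsChain R) (hS : l.IsChain S) :
    l.IsChain fun a b => R a b ∧ S a b := by
  induction hR with
  | nil => exact .nil
  | singleton a => exact .singleton a
  | cons_cons hab _ ih =>
    rw [isChain_cons_cons] at hS
    exact .cons_cons ⟨hab, hS.1⟩ (ih hS.2)

theorem Nodup.head_ne_getLast : ∀ {l : List α}, l.Nodup → ∀ (hne : l ≠ []),
    2 ≤ l.length → l.head hne ≠ l.getLast hne
  | a :: t, hl, _, h2 => by
    have ht : t ≠ [] := ne_nil_of_length_pos (by simp at h2; omega)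
    rw [head_cons, getLast_cons ht]
    exact fun heq => (nodup_cons.mp hl).1 (heq ▸ getLast_mem ht)

end List

namespace SimpleGraph

variable {V : Type*} {G : SimpleGraph V}

def Walk.IsDominating {u v : V} (T : G.Walk u v) : Prop :=
  ∀ e ∈ G.edgeSet, ∃ w ∈ T.support, w ∈ e

theorem Walk.exists_cons_of_mem_edge {e : Sym2 V} (he : e ∈ G.edgeSet) {x v y : V}
    (hx : x ∈ e) (hv : v ∈ e) (q : G.Walk v y) :
    ∃ q' : G.Walk x y, q'.edges.Sublist (e :: q.edges) ∧ q.support ⊆ q'.support := by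
  by_cases hxv : x = v
  · subst hxv
    exact ⟨q, List.sublist_cons_self e _, List.Subset.refl _⟩
  · obtain rfl : e = s(x, v) := (Sym2.mem_and_mem_iff hxv).mp ⟨hx, hv⟩
    exact ⟨.cons he q, List.Sublist.refl _, List.subset_cons_self _ _⟩

theorem exists_walk_of_lineGraph_walk : ∀ {e f : G.edgeSet} (p : G.lineGraph.Walk e f)
    {x y : V}, x ∈ (e : Sym2 V) → y ∈ (f : Sym2 V) →
    ∃ q : G.Walk x y, q.edges.Sublist (p.support.map Subtype.val) ∧
      ∀ e' ∈ p.support, ∃ z ∈ q.support, z ∈ (e' : Sym2 V)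
  | e, _, .nil, x, y, hx, hy => by
    obtain ⟨q, hq, hsupp⟩ := Walk.exists_cons_of_mem_edge e.2 hx hy (.nil : G.Walk y y)
    refine ⟨q, by simpa using hq, ?_⟩
    simp only [Walk.support_nil, List.mem_singleton, forall_eq]
    exact ⟨y, hsupp (by simp), hy⟩
  | e, _, .cons hadj p, x, y, hx, hy => by
    obtain ⟨-, v, hve, hve'⟩ := lineGraph_adj_iff_exists.mp hadj
    obtain ⟨q, hq, hdom⟩ := exists_walk_of_lineGraph_walk p hve' hy
    obtain ⟨q', hq', hsupp⟩ := Walk.exists_cons_of_mem_edge e.2 hx hve q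
    refine ⟨q', hq'.trans (by simpa using hq), ?_⟩
    simp only [Walk.support_cons, List.mem_cons, forall_eq_or_imp]
    refine ⟨⟨v, hsupp q.start_mem_support, hve⟩, fun e' he' => ?_⟩
    obtain ⟨z, hz, hze⟩ := hdom e' he'
    exact ⟨z, hsupp hz, hze⟩

section Sweep

variable [DecidableEq V]

def Walk.edgeSweep : {x y : V} → G.Walk x y → List G.edgeSet → List G.edgeSet
  | x, _, .nil, S => S.filter fun e => x ∈ (e : Sym2 V)
  | x, _, .cons (v := c) h w, S =>
    S.filter (fun e : G.edgeSet => x ∈ (e : Sym2 V)) ++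
      (⟨s(x, c), h⟩ : G.edgeSet) :: w.edgeSweep (S.filter fun e => x ∉ (e : Sym2 V))

theorem Walk.mem_edgeSweep {x y : V} (w : G.Walk x y) (S : List G.edgeSet) (e : G.edgeSet) :
    e ∈ w.edgeSweep S ↔ (e : Sym2 V) ∈ w.edges ∨ e ∈ S ∧ ∃ z ∈ w.support, z ∈ (e : Sym2 V) := by
  induction w generalizing S with
  | nil => simp [edgeSweep]
  | cons h w ih =>
    simp only [edgeSweep, List.mem_append, List.mem_filter, decide_eq_true_eq, List.mem_cons, ih,
      decide_not, Bool.not_eq_true', decide_eq_false_iff_not, Subtype.ext_iff, edges_cons,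
      support_cons, exists_eq_or_imp]
    tauto

theorem Walk.nodup_edgeSweep {x y : V} (w : G.Walk x y) {S : List G.edgeSet} (hS : S.Nodup)
    (hw : w.IsTrail) (hSw : ∀ e ∈ S, (e : Sym2 V) ∉ w.edges) : (w.edgeSweep S).Nodup := by
  induction w generalizing S with
  | nil => exact hS.filter _
  | @cons x c _ h w ih =>
    rw [isTrail_cons] at hw
    simp only [edges_cons, List.mem_cons, not_or] at hSw
    simp only [edgeSweep, List.nodup_append, List.nodup_cons, mem_edgeSweep, List.mem_filter]
    have hS' := ih (hS.filter fun e : G.edgeSet => x ∉ (e : Sym2 V)) hw.1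
      fun e he => (hSw e (List.mem_of_mem_filter he)).2
    refine ⟨hS.filter _, ⟨?_, hS'⟩, ?_⟩
    · rintro (hmem | ⟨⟨hmem, -⟩, -⟩)
      exacts [hw.2 hmem, (hSw _ hmem).1 rfl]
    · rintro e ⟨heS, hxe⟩ _ hmem rfl
      rw [List.mem_cons, mem_edgeSweep, List.mem_filter] at hmem
      rcases hmem with rfl | hmem | ⟨⟨-, hxe'⟩, -⟩
      · exact (hSw _ heS).1 rfl
      · exact (hSw _ heS).2 hmem
      · simp_all

theorem Walk.head_edgeSweep {x y : V} (w : G.Walk x y) (S : List G.edgeSet) :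
    ∀ e ∈ (w.edgeSweep S).head?, x ∈ (e : Sym2 V) := by
  intro e he
  cases w with
  | nil => simpa using (List.mem_filter.mp (List.mem_of_mem_head? he)).2
  | cons h w =>
    simp only [edgeSweep, List.head?_append, List.head?_cons] at he
    rcases hf : (S.filter fun e : G.edgeSet => x ∈ (e : Sym2 V)).head? with _ | f
    · rw [hf, Option.none_or, Option.mem_some_iff] at he
      simp [← he]
    · rw [hf, Option.some_or, Option.mem_some_iff] at he
      subst he
      simpa using (List.mem_filter.mp (List.mem_of_mem_head? hf)).2

theorem Walk.getLast_edgeSweep {x y : V} (w : G.Walk x y) (S : List G.edgeSet) :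
    ∀ e ∈ (w.edgeSweep S).getLast?, y ∈ (e : Sym2 V) := by
  intro e he
  induction w generalizing S with
  | nil => simpa using (List.mem_filter.mp (List.mem_of_mem_getLast? he)).2
  | @cons x c _ h w ih =>
    simp only [edgeSweep, List.getLast?_append_cons, List.getLast?_cons] at he
    rcases hR : (w.edgeSweep (S.filter fun e : G.edgeSet => x ∉ (e : Sym2 V))).getLast? with _ | f
    · rw [hR, Option.getD_none, Option.mem_some_iff] at he
      cases w with
      | nil => simp [← he]
      | cons => simp [edgeSweep] at hR
    · rw [hR, Option.getD_some, Option.mem_some_iff] at he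
      exact ih _ (he ▸ hR)

theorem Walk.isChain_edgeSweep {x y : V} (w : G.Walk x y) (S : List G.edgeSet) :
    (w.edgeSweep S).IsChain fun e f : G.edgeSet => ∃ v, v ∈ (e : Sym2 V) ∧ v ∈ (f : Sym2 V) := by
  have filter_isChain (x : V) (S : List G.edgeSet) :
      (S.filter fun e : G.edgeSet => x ∈ (e : Sym2 V)).IsChain
        fun e f : G.edgeSet => ∃ v, v ∈ (e : Sym2 V) ∧ v ∈ (f : Sym2 V) :=
    List.Pairwise.isChain <| List.pairwise_of_forall_mem_list fun e he f hf =>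
      ⟨x, by simpa using (List.mem_filter.mp he).2, by simpa using (List.mem_filter.mp hf).2⟩
  induction w generalizing S with
  | nil => exact filter_isChain _ _
  | @cons x c _ h w ih =>
    rw [edgeSweep, List.isChain_append, List.isChain_cons]
    refine ⟨filter_isChain x S, ⟨fun f hf => ⟨c, by simp, head_edgeSweep w _ f hf⟩, ih _⟩, ?_⟩
    intro e he f hf
    rw [List.head?_cons, Option.mem_some_iff] at hf
    exact ⟨x, by simpa using (List.mem_filter.mp (List.mem_of_mem_getLast? he)).2, by simp [← hf]⟩

end Sweep

end SimpleGraph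

namespace Paper

theorem hamGraph_of_isChain {α : Type*} {H : SimpleGraph α} (l : List α) (hne : l ≠ [])
    (hl : l.Nodup) (h3 : 3 ≤ l.length) (hchain : l.IsChain H.Adj)
    (hwrap : H.Adj (l.getLast hne) (l.head hne)) (hcov : ∀ x, x ∈ l) : HamGraph H := by
  refine ⟨_, .cons hwrap (.ofSupport l hne hchain), ?_, fun x => by simp [hcov]⟩
  rw [Walk.isCycle_iff_isPath_tail_and_le_length]
  simp only [Walk.getVert_cons_succ, Walk.tail_cons, Walk.isPath_def, Walk.support_copy,
    Walk.support_ofSupport, Walk.length_cons, Walk.length_ofSupport]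
  exact ⟨hl, by omega⟩

theorem hamGraph_lineGraph_of_isChain {V : Type*} {G : SimpleGraph V} (l : List G.edgeSet)
    (hl : l.Nodup) (h3 : 3 ≤ l.length) (hcov : ∀ e, e ∈ l)
    (hchain : l.IsChain fun e f : G.edgeSet => ∃ v, v ∈ (e : Sym2 V) ∧ v ∈ (f : Sym2 V))
    (v : V) (hhead : ∀ e ∈ l.head?, v ∈ (e : Sym2 V))
    (hlast : ∀ e ∈ l.getLast?, v ∈ (e : Sym2 V)) :
    HamGraph G.lineGraph := by
  have hne : l ≠ [] := List.ne_nil_of_length_pos (by omega)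
  refine hamGraph_of_isChain l hne hl h3
    (hl.isChain.and hchain |>.imp fun _ _ h => lineGraph_adj_iff_exists.mpr h) ?_ hcov
  exact lineGraph_adj_iff_exists.mpr ⟨(hl.head_ne_getLast hne (by omega)).symm, v,
    hlast _ (List.getLast_mem_getLast? hne), hhead _ (List.head_mem_head? hne)⟩

theorem exists_dominating_trail_of_hamGraph_lineGraph {V : Type*} {G : SimpleGraph V}
    (h : HamGraph G.lineGraph) : ∃ (u : V) (T : G.Walk u u), T.IsTrail ∧ T.IsDominating := by
  obtain ⟨a, c, hc, hcov⟩ := h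
  obtain ⟨-, x, hxa, hxs⟩ := lineGraph_adj_iff_exists.mp (c.adj_snd hc.not_nil)
  obtain ⟨T, hT, hdom⟩ := exists_walk_of_lineGraph_walk c.tail hxs hxa
  have hmem (f : G.edgeSet) : f ∈ c.tail.support := by
    rw [c.support_tail_of_not_nil hc.not_nil]
    rcases c.mem_support_iff.mp (hcov f) with rfl | hf
    · rw [← c.support_tail_of_not_nil hc.not_nil]
      exact c.tail.end_mem_support
    · exact hf
  exact ⟨x, T, ⟨(hc.isPath_tail.support_nodup.map Subtype.val_injective).sublist hT⟩,
    fun e he => hdom ⟨e, he⟩ (hmem _)⟩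

theorem hamGraph_lineGraph_of_dominating_trail {V : Type*} {G : SimpleGraph V}
    (h3 : 3 ≤ G.edgeSet.ncard) {u : V} {T : G.Walk u u} (hT : T.IsTrail)
    (hdom : T.IsDominating) : HamGraph G.lineGraph := by
  classical
  have : Fintype G.edgeSet := (Set.finite_of_ncard_pos (by omega)).fintype
  set L := T.edgeSweep (Finset.univ.filter fun e : G.edgeSet => (e : Sym2 V) ∉ T.edges).toList
  have hL : L.Nodup := T.nodup_edgeSweep (Finset.nodup_toList _) hT (by simp)
  have hcov (e : G.edgeSet) : e ∈ L := by
    rw [Walk.mem_edgeSweep]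
    by_cases he : (e : Sym2 V) ∈ T.edges
    · exact .inl he
    · exact .inr ⟨by simp [he], hdom e e.2⟩
  have hlen : 3 ≤ L.length := calc
    3 ≤ G.edgeSet.ncard := h3
    _ = Finset.univ.card := by
      rw [← Nat.card_coe_set_eq, Nat.card_eq_fintype_card, Finset.card_univ]
    _ ≤ L.toFinset.card := Finset.card_le_card fun e _ => List.mem_toFinset.mpr (hcov e)
    _ ≤ L.length := L.toFinset_card_le
  exact hamGraph_lineGraph_of_isChain L hL hlen hcov (T.isChain_edgeSweep _) u
    (T.head_edgeSweep _) (T.getLast_edgeSweep _)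

theorem stmt0_general {V : Type*} (G : SimpleGraph V)
    (h3 : 3 ≤ G.edgeSet.ncard) :
    HamGraph G.lineGraph ↔
      ∃ (u : V) (T : G.Walk u u), T.IsTrail ∧
        ∀ e ∈ G.edgeSet, ∃ w ∈ T.support, w ∈ e :=
  ⟨exists_dominating_trail_of_hamGraph_lineGraph,
    fun ⟨_, _, hT, hdom⟩ => hamGraph_lineGraph_of_dominating_trail h3 hT hdom⟩

/-- Harary–Nash-Williams: `L(G)` is hamiltonian iff `G` has a dominating closed trail. -/
theorem stmt0 {V : Type*} (G : SimpleGraph V) (hG : G.Connected)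
    (h3 : 3 ≤ G.edgeSet.ncard) :
    HamGraph G.lineGraph ↔
      ∃ (u : V) (T : G.Walk u u), T.IsTrail ∧
        ∀ e ∈ G.edgeSet, ∃ w ∈ T.support, w ∈ e :=
  stmt0_general G h3
end Paper
end

section
/- Let G be a connected graph with at least three edges. Then the line graph L(G) is traceable (has a Hamiltonian path) if and only if G has a dominating trail. -/
open SimpleGraph

namespace Paper

/-!
A hamiltonian path of `L(G)` is a list of all edges of `G` without repetition in which
consecutive edges meet. Walking along such a list, and stepping across an edge only when the
vertex it shares with the next edge is not the current one, produces a trail whose edges form a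
sublist of the list and which touches every edge. Conversely, given a dominating trail, insert
each remaining edge into the trail's edge sequence right at the first trail vertex it contains;
consecutive entries of the resulting list still meet.
-/

theorem _root_.List.IsChain.and_s1 {α : Type*} {R S : α → α → Prop} {l : List α}
    (hR : l.IsChain R) (hS : l.IsChain S) : l.IsChain fun a b => R a b ∧ S a b := by
  induction l using List.twoStepInduction <;> grind

theorem traceable_iff_exists_list {α : Type*} (H : SimpleGraph α) :
    Traceable H ↔ ∃ l : List α, l ≠ [] ∧ l.Nodup ∧ (∀ a, a ∈ l) ∧ l.IsChain H.Adj := by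
  constructor
  · rintro ⟨a, b, p, hp, hall⟩
    exact ⟨p.support, p.support_ne_nil, hp.support_nodup, hall, p.isChain_adj_support⟩
  · rintro ⟨l, hne, hnd, hall, hchain⟩
    refine ⟨_, _, Walk.ofSupport l hne hchain, ?_, ?_⟩
    · exact Walk.IsPath.mk' (by rwa [Walk.support_ofSupport])
    · simpa only [Walk.support_ofSupport] using hall

section

variable {V : Type*} {G : SimpleGraph V}

def IsEdgeChain (l : List (Sym2 V)) : Prop :=
  l.IsChain fun e f => ∃ x, x ∈ e ∧ x ∈ f

theorem traceable_lineGraph_iff (hne : G.edgeSet.Nonempty) :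
    Traceable G.lineGraph ↔
      ∃ l : List (Sym2 V), l.Nodup ∧ (∀ e, e ∈ l ↔ e ∈ G.edgeSet) ∧ IsEdgeChain l := by
  rw [traceable_iff_exists_list]
  constructor
  · rintro ⟨l, -, hnd, hall, hchain⟩
    refine ⟨l.map Subtype.val, hnd.map Subtype.val_injective, fun e => ?_, ?_⟩
    · exact ⟨fun he => by obtain ⟨e', -, rfl⟩ := List.mem_map.1 he; exact e'.2,
        fun he => List.mem_map_of_mem (hall ⟨e, he⟩)⟩
    · exact (List.isChain_map _).2 (hchain.imp fun e f h => (lineGraph_adj_iff_exists.1 h).2)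
  · rintro ⟨l, hnd, hmem, hchain⟩
    lift l to List G.edgeSet using fun e he => (hmem e).1 he
    have hnd' : l.Nodup := hnd.of_map _
    have hall : ∀ e, e ∈ l :=
      fun e => (List.mem_map_of_injective Subtype.val_injective).1 ((hmem e).2 e.2)
    refine ⟨l, List.ne_nil_of_mem (hall ⟨_, hne.some_mem⟩), hnd', hall, ?_⟩
    exact ((List.Pairwise.isChain hnd').and_s1 ((List.isChain_map _).1 hchain)).imp
      fun e f h => lineGraph_adj_iff_exists.2 h

theorem exists_walk_of_isEdgeChain :
    ∀ (e : Sym2 V) (es : List (Sym2 V)) (v : V), v ∈ e → (∀ f ∈ e :: es, f ∈ G.edgeSet) →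
      IsEdgeChain (e :: es) →
      ∃ w, ∃ W : G.Walk v w, W.edges.Sublist (e :: es) ∧ ∀ f ∈ e :: es, ∃ x ∈ W.support, x ∈ f
  | e, [], v, hv, _, _ => ⟨v, .nil, by simp, by simpa using hv⟩
  | e, e' :: es, v, hv, hG, hchain => by
    obtain ⟨⟨x, hxe, hxe'⟩, hchain'⟩ := List.isChain_cons_cons.1 hchain
    obtain ⟨w, W, hsub, hdom⟩ := exists_walk_of_isEdgeChain e' es x hxe'
      (fun f hf => hG f (.tail _ hf)) hchain'
    by_cases hvx : v = x
    · subst hvx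
      refine ⟨w, W, hsub.cons _, List.forall_mem_cons.2 ⟨⟨v, W.start_mem_support, hv⟩, hdom⟩⟩
    · have he : e = s(v, x) := (Sym2.mem_and_mem_iff hvx).1 ⟨hv, hxe⟩
      have hadj : G.Adj v x := by rw [← mem_edgeSet, ← he]; exact hG e (.head _)
      refine ⟨w, .cons hadj W, by rw [he, Walk.edges_cons]; exact hsub.cons_cons _,
        List.forall_mem_cons.2 ⟨⟨v, Walk.start_mem_support _, hv⟩, fun f hf => ?_⟩⟩
      obtain ⟨y, hy, hyf⟩ := hdom f hf
      exact ⟨y, by simp [hy], hyf⟩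

theorem exists_isTrail_of_isEdgeChain {l : List (Sym2 V)} (hl : l ≠ []) (hnd : l.Nodup)
    (hG : ∀ e ∈ l, e ∈ G.edgeSet) (hchain : IsEdgeChain l) :
    ∃ (u v : V) (T : G.Walk u v), T.IsTrail ∧ ∀ e ∈ l, ∃ w ∈ T.support, w ∈ e := by
  obtain ⟨e, es, rfl⟩ := List.exists_cons_of_ne_nil hl
  obtain ⟨w, W, hsub, hdom⟩ := exists_walk_of_isEdgeChain e es _ e.out_fst_mem hG hchain
  exact ⟨_, w, W, W.isTrail_def.2 (hsub.nodup hnd), hdom⟩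

theorem isEdgeChain_of_forall_mem {u : V} {l : List (Sym2 V)} (h : ∀ e ∈ l, u ∈ e) :
    IsEdgeChain l :=
  List.Pairwise.isChain <| List.pairwise_of_forall_mem_list fun e he f hf => ⟨u, h e he, h f hf⟩

section spread

open List

variable [DecidableEq V]

def spreadEdges : ∀ {u v : V}, G.Walk u v → List (Sym2 V) → List (Sym2 V)
  | _, _, .nil, R => R
  | u, _, .cons (v := u') _ T, R =>
    R.filter (u ∈ ·) ++ s(u, u') :: spreadEdges T (R.filter (u ∉ ·))

theorem spreadEdges_perm : ∀ {u v : V} (T : G.Walk u v) (R : List (Sym2 V)),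
    (spreadEdges T R).Perm (R ++ T.edges)
  | _, _, .nil, R => by simp [spreadEdges]
  | u, _, .cons (v := u') _ T, R => by
    rw [spreadEdges, Walk.edges_cons]
    calc (R.filter (u ∈ ·) ++ s(u, u') :: spreadEdges T (R.filter (u ∉ ·))).Perm
          (R.filter (u ∈ ·) ++ s(u, u') :: (R.filter (u ∉ ·) ++ T.edges)) :=
          ((spreadEdges_perm T _).cons _).append_left _
      _ ~ s(u, u') :: (R.filter (u ∈ ·) ++ (R.filter (u ∉ ·) ++ T.edges)) := perm_middle
      _ ~ s(u, u') :: (R ++ T.edges) := by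
          simpa only [← append_assoc, decide_not] using
            ((filter_append_perm (u ∈ ·) R).append_right T.edges).cons s(u, u')
      _ ~ R ++ s(u, u') :: T.edges := perm_middle.symm

theorem isEdgeChain_spreadEdges : ∀ {u v : V} (T : G.Walk u v) (R : List (Sym2 V)),
    (∀ e ∈ R, ∃ x ∈ T.support, x ∈ e) →
      IsEdgeChain (spreadEdges T R) ∧ ∀ e ∈ (spreadEdges T R).head?, u ∈ e
  | u, _, .nil, R, hdom => by
    have hu : ∀ e ∈ R, u ∈ e := by simpa using hdom
    exact ⟨isEdgeChain_of_forall_mem hu, fun e he => hu e (mem_of_mem_head? he)⟩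
  | u, _, .cons (v := u') _ T, R, hdom => by
    have hdom' : ∀ e ∈ R.filter (u ∉ ·), ∃ x ∈ T.support, x ∈ e := by
      intro e he
      obtain ⟨heR, hue⟩ := by simpa using he
      obtain ⟨x, hx, hxe⟩ := hdom e heR
      rcases (Walk.mem_support_iff _).1 hx with rfl | hx
      exacts [absurd hxe hue, ⟨x, hx, hxe⟩]
    obtain ⟨hchain, hhead⟩ := isEdgeChain_spreadEdges T _ hdom'
    have hu : ∀ e ∈ R.filter (u ∈ ·), u ∈ e := fun e he => by simpa using (mem_filter.1 he).2
    rw [spreadEdges]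
    refine ⟨isChain_append.2 ⟨isEdgeChain_of_forall_mem hu, ?_, ?_⟩, ?_⟩
    · exact isChain_cons.2 ⟨fun f hf => ⟨u', Sym2.mem_mk_right _ _, hhead f hf⟩, hchain⟩
    · exact fun e he f hf => ⟨u, hu e (mem_of_mem_getLast? he), by
        simp only [head?_cons, Option.mem_def, Option.some.injEq] at hf; simp [← hf]⟩
    · generalize R.filter (u ∈ ·) = F at hu
      cases F with
      | nil => simp
      | cons a F => simpa using hu a mem_cons_self

end spread

theorem exists_isEdgeChain_of_dominating_trail (hfin : G.edgeSet.Finite) {u v : V}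
    {T : G.Walk u v} (hT : T.IsTrail) (hdom : ∀ e ∈ G.edgeSet, ∃ w ∈ T.support, w ∈ e) :
    ∃ l : List (Sym2 V), l.Nodup ∧ (∀ e, e ∈ l ↔ e ∈ G.edgeSet) ∧ IsEdgeChain l := by
  classical
  set R := (hfin.toFinset \ T.edges.toFinset).toList
  have hmemR : ∀ e, e ∈ R ↔ e ∈ G.edgeSet ∧ e ∉ T.edges := by simp [R]
  have hperm := spreadEdges_perm T R
  refine ⟨spreadEdges T R, hperm.nodup_iff.2 ?_, fun e => hperm.mem_iff.trans ?_,
    (isEdgeChain_spreadEdges T R fun e he => hdom e ((hmemR e).1 he).1).1⟩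
  · exact (Finset.nodup_toList _).append hT.edges_nodup fun e he he' => ((hmemR e).1 he).2 he'
  · rw [List.mem_append, hmemR]
    have := T.edges_subset_edgeSet (e := e)
    tauto

end

theorem stmt1_general {V : Type*} (G : SimpleGraph V)
    (h3 : 3 ≤ G.edgeSet.ncard) :
    Traceable G.lineGraph ↔
      ∃ (u v : V) (T : G.Walk u v), T.IsTrail ∧
        ∀ e ∈ G.edgeSet, ∃ w ∈ T.support, w ∈ e := by
  have hne : G.edgeSet.Nonempty := Set.nonempty_of_ncard_ne_zero (by omega)
  rw [traceable_lineGraph_iff hne]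
  constructor
  · rintro ⟨l, hnd, hmem, hchain⟩
    obtain ⟨u, v, T, hT, hdom⟩ := exists_isTrail_of_isEdgeChain
      (List.ne_nil_of_mem ((hmem _).2 hne.some_mem)) hnd (fun e he => (hmem e).1 he) hchain
    exact ⟨u, v, T, hT, fun e he => hdom e ((hmem e).2 he)⟩
  · rintro ⟨u, v, T, hT, hdom⟩
    exact exists_isEdgeChain_of_dominating_trail (Set.finite_of_ncard_pos (by omega)) hT hdom

/-- `L(G)` is traceable iff `G` has a dominating trail. -/
theorem stmt1 {V : Type*} (G : SimpleGraph V) (hG : G.Connected)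
    (h3 : 3 ≤ G.edgeSet.ncard) :
    Traceable G.lineGraph ↔
      ∃ (u v : V) (T : G.Walk u v), T.IsTrail ∧
        ∀ e ∈ G.edgeSet, ∃ w ∈ T.support, w ∈ e :=
  stmt1_general G h3
end Paper
end

section
/- If C is a cycle in the line graph L(G) with at least three edges, then there exists a circuit H of G such that L(G[Ē(H)]) contains C as a subgraph and every edge of H (viewed as a vertex of L(G)) lies on C. -/
open SimpleGraph

/-
Walk along the cycle `e₀ e₁ ⋯ e_{n-1} e₀` of `L(G)` inside `G`, starting at a common end `z` of
`e₀` and `e₁`: while the current vertex lies on the next edge of the cycle stay put, otherwise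
cross the current edge to its other end, which lies on the next edge. This produces a walk from
`z` to an end `y` of `e₀` meeting every `eᵢ` and using each of the distinct edges
`e₁, …, e_{n-1}` at most once, so it is a trail avoiding `e₀`. Closing it with `e₀` (unless
`y = z`) gives a closed trail, whose edges span a connected subgraph with all degrees even.
-/

namespace SimpleGraph

variable {V : Type*} {G : SimpleGraph V}

namespace Walk

theorem IsTrail.ncard_neighborSet_toSubgraph [DecidableEq V] {u v : V} {p : G.Walk u v}
    (hp : p.IsTrail) (x : V) :
    (p.toSubgraph.neighborSet x).ncard = p.edges.countP (x ∈ ·) := by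
  have hinc : p.toSubgraph.spanningCoe.incidenceSet x = ↑(p.edges.filter (x ∈ ·)).toFinset := by
    ext e
    simp [incidenceSet, Subgraph.edgeSet_spanningCoe]
  calc (p.toSubgraph.neighborSet x).ncard
      = (p.toSubgraph.spanningCoe.incidenceSet x).ncard :=
        (Nat.card_congr (p.toSubgraph.spanningCoe.incidenceSetEquivNeighborSet x)).symm
    _ = p.edges.countP (x ∈ ·) := by
        rw [hinc, Set.ncard_coe_finset, List.toFinset_card_of_nodup (hp.edges_nodup.filter _),
          List.countP_eq_length_filter]

theorem IsTrail.exists_isTrail_closing {z y : V} {p : G.Walk z y} (hp : p.IsTrail)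
    {e : Sym2 V} (he : e ∈ G.edgeSet) (hz : z ∈ e) (hy : y ∈ e) (hep : e ∉ p.edges) :
    ∃ q : G.Walk z z, q.IsTrail ∧ q.edges ⊆ e :: p.edges ∧ p.support ⊆ q.support := by
  obtain rfl | hzy := eq_or_ne z y
  · exact ⟨p, hp, List.subset_cons_self _ _, List.Subset.refl _⟩
  obtain rfl : e = s(z, y) := (Sym2.mem_and_mem_iff hzy).mp ⟨hz, hy⟩
  refine ⟨cons (G.mem_edgeSet.mp he) p.reverse, ?_, ?_, ?_⟩
  · simpa using ⟨hp, hep⟩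
  · simp [List.subset_def]
  · simp +contextual [List.subset_def]

theorem exists_walk_of_lineGraph_adj {a a' : G.edgeSet} (h : G.lineGraph.Adj a a') {x : V}
    (hx : x ∈ (a : Sym2 V)) :
    ∃ w ∈ (a' : Sym2 V), ∃ r : G.Walk x w, r.edges.Sublist [(a : Sym2 V)] := by
  by_cases hxa' : x ∈ (a' : Sym2 V)
  · exact ⟨x, hxa', nil, by simp⟩
  obtain ⟨-, z, hza, hza'⟩ := lineGraph_adj_iff_exists.mp h
  have hxz : x ≠ z := fun hxz => hxa' (hxz ▸ hza')
  have hea : (a : Sym2 V) = s(x, z) := (Sym2.mem_and_mem_iff hxz).mp ⟨hx, hza⟩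
  have hadj : G.Adj x z := by rw [← G.mem_edgeSet, ← hea]; exact a.2
  exact ⟨z, hza', cons hadj nil, by simp [hea]⟩

theorem exists_walk_of_lineGraph_walk {a b : G.edgeSet} (Q : G.lineGraph.Walk a b) {x : V}
    (hx : x ∈ (a : Sym2 V)) :
    ∃ y ∈ (b : Sym2 V), ∃ p : G.Walk x y,
      p.edges.Sublist (Q.support.dropLast.map Subtype.val) ∧
      ∀ c ∈ Q.support, ∃ v ∈ p.support, v ∈ (c : Sym2 V) := by
  induction Q generalizing x with
  | nil => exact ⟨x, hx, nil, by simp, by simpa using hx⟩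
  | @cons a a' b h Q ih =>
    obtain ⟨w, hwa', r, hr⟩ := exists_walk_of_lineGraph_adj h hx
    obtain ⟨y, hyb, p, hpQ, hcov⟩ := ih hwa'
    refine ⟨y, hyb, r.append p, ?_, ?_⟩
    · rw [support_cons, List.dropLast_cons_of_ne_nil Q.support_ne_nil, List.map_cons,
        edges_append, ← List.singleton_append]
      exact hr.append hpQ
    · intro c hc
      rw [support_cons, List.mem_cons] at hc
      obtain rfl | hc := hc
      · exact ⟨x, (r.append p).start_mem_support, hx⟩
      · obtain ⟨v, hv, hvc⟩ := hcov c hc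
        exact ⟨v, (mem_support_append_iff r p).mpr (Or.inr hv), hvc⟩

end Walk

end SimpleGraph

namespace Paper

theorem isCircuit_toSubgraph {V : Type*} {G : SimpleGraph V} {u : V} {q : G.Walk u u}
    (hq : q.IsTrail) : IsCircuit q.toSubgraph := by
  classical
  refine ⟨q.toSubgraph_connected, fun v => ?_⟩
  rw [sdeg, hq.ncard_neighborSet_toSubgraph, hq.even_countP_edges_iff]
  exact fun h => absurd rfl h

theorem stmt4_general {V : Type*} (G : SimpleGraph V) {e : G.edgeSet}
    (C : G.lineGraph.Walk e e) (hC : C.IsCycle) :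
    ∃ H : G.Subgraph, IsCircuit H ∧
      (∀ f ∈ C.support, (f : Sym2 V) ∈ barE G H) ∧
      (∀ e' ∈ H.edgeSet, ∃ f ∈ C.support, (f : Sym2 V) = e') := by
  cases C with
  | nil => exact absurd hC Walk.not_isCycle_nil
  | @cons _ e₁ _ h C' =>
    obtain ⟨-, z, hze, hze₁⟩ := lineGraph_adj_iff_exists.mp h
    obtain ⟨y, hye, p, hpC', hcov⟩ := C'.exists_walk_of_lineGraph_walk hze₁
    have hpL : ((e : Sym2 V) :: p.edges).Sublist
        ((Walk.cons h C').support.dropLast.map Subtype.val) := by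
      rw [Walk.support_cons, List.dropLast_cons_of_ne_nil C'.support_ne_nil, List.map_cons]
      exact hpC'.cons_cons _
    obtain ⟨hep, hp⟩ := List.nodup_cons.mp
      ((hC.nodup_dropLast_support.map Subtype.val_injective).sublist hpL)
    obtain ⟨q, hq, hqp, hpq⟩ := Walk.IsTrail.exists_isTrail_closing ⟨hp⟩ e.2 hze hye hep
    refine ⟨q.toSubgraph, isCircuit_toSubgraph hq, fun f hf => ⟨f.2, ?_⟩, fun e' he' => ?_⟩
    · rw [Walk.support_cons, List.mem_cons] at hf
      obtain rfl | hf := hf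
      · exact ⟨z, q.start_mem_verts_toSubgraph, hze⟩
      · obtain ⟨v, hv, hvf⟩ := hcov f hf
        exact ⟨v, q.mem_verts_toSubgraph.mpr (hpq hv), hvf⟩
    · obtain ⟨f, hf, rfl⟩ := List.mem_map.mp (hpL.subset (hqp (q.mem_edges_toSubgraph.mp he')))
      exact ⟨f, List.dropLast_subset _ hf, rfl⟩

/-- If `C` is a cycle of `L(G)` with at least three edges, then `S(G,C)` is nonempty:
there is a circuit `H` of `G` such that `L(G[Ē(H)])` contains `C` and `C` contains all
elements of `E(H)`. -/
theorem stmt4 {V : Type*} (G : SimpleGraph V) {e : G.edgeSet}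
    (C : G.lineGraph.Walk e e) (hC : C.IsCycle) (h3 : 3 ≤ C.length) :
    ∃ H : G.Subgraph, IsCircuit H ∧
      (∀ f ∈ C.support, (f : Sym2 V) ∈ barE G H) ∧
      (∀ e' ∈ H.edgeSet, ∃ f ∈ C.support, (f : Sym2 V) = e') :=
  stmt4_general G C hC
end Paper
end

section
/- If a graph G has a circuit H such that Ē(H) contains at least three edges, then the line graph L(G) has a cycle C whose vertex set is exactly Ē(H). -/
open SimpleGraph

lemma List.IsChain.and_ne {α : Type*} {R : α → α → Prop} {l : List α} (h : l.IsChain R)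
    (hl : l.Nodup) : l.IsChain fun a b => a ≠ b ∧ R a b := by
  induction h with
  | nil => exact .nil
  | singleton => exact .singleton _
  | cons_cons hab _ ih => exact .cons_cons ⟨by grind, hab⟩ (ih hl.of_cons)

namespace Sym2

variable {α : Type*}

def Meets (e f : Sym2 α) : Prop := ∃ v ∈ e, v ∈ f

lemma isChain_meets_of_forall_mem {v : α} {l : List (Sym2 α)} (h : ∀ e ∈ l, v ∈ e) :
    l.IsChain Meets :=
  (List.pairwise_of_forall_mem_list fun e he f hf => ⟨v, h e he, h f hf⟩).isChain

end Sym2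

namespace SimpleGraph

variable {V β : Type*} {G : SimpleGraph V} {Γ : SimpleGraph β}

namespace Walk

lemma IsTrail.exists_adj_notMem_edges {a b : V} {p : G.Walk a b} (hp : p.IsTrail) (hab : a ≠ b)
    (heven : Even (G.neighborSet a).ncard) : ∃ w, G.Adj w a ∧ s(w, a) ∉ p.edges := by
  classical
  by_contra! h
  have hinc : {e | e ∈ p.edges ∧ a ∈ e} = G.incidenceSet a := by
    ext e
    refine ⟨fun ⟨he, ha⟩ => ⟨p.edges_subset_edgeSet he, ha⟩, fun ⟨he, ha⟩ => ⟨?_, ha⟩⟩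
    obtain ⟨w, rfl⟩ := Sym2.mem_iff_exists.mp ha
    exact Sym2.eq_swap ▸ h w (G.adj_symm he)
  have hcount : p.edges.countP (a ∈ ·) = (G.neighborSet a).ncard := by
    rw [← Nat.card_coe_set_eq, ← Nat.card_congr (G.incidenceSetEquivNeighborSet a),
      Nat.card_coe_set_eq, ← hinc, List.countP_eq_length_filter,
      ← List.toFinset_card_of_nodup (hp.edges_nodup.filter _), ← Set.ncard_coe_finset]
    congr 1
    ext e
    simp
  exact ((hp.even_countP_edges_iff a).1 (hcount ▸ heven) hab).1 rfl

lemma exists_adj_notMem_edges_of_reachable {a b u x y : V} (p : G.Walk a b) (hu : u ∈ p.support)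
    (hr : G.Reachable u x) (hxy : G.Adj x y) (hxyp : s(x, y) ∉ p.edges) :
    ∃ z ∈ p.support, ∃ w, G.Adj w z ∧ s(w, z) ∉ p.edges := by
  by_cases hx : x ∈ p.support
  · exact ⟨x, hx, y, hxy.symm, Sym2.eq_swap ▸ hxyp⟩
  obtain ⟨q⟩ := hr
  obtain ⟨d, -, hd, hd'⟩ := q.exists_boundary_dart {z | z ∈ p.support} hu hx
  exact ⟨d.fst, hd, d.snd, d.adj.symm, fun h => hd' (p.fst_mem_support_of_mem_edges h)⟩

end Walk

lemma exists_isTrail_forall_length_le_of_mem_support [Finite G.edgeSet] (u : V) :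
    ∃ (a b : V) (p : G.Walk a b), p.IsTrail ∧ u ∈ p.support ∧
      ∀ (a' b' : V) (q : G.Walk a' b'), q.IsTrail → u ∈ q.support → q.length ≤ p.length := by
  have := Fintype.ofFinite G.edgeSet
  let s := {n | ∃ (a b : V) (p : G.Walk a b), p.IsTrail ∧ u ∈ p.support ∧ p.length = n}
  have hs : s.Finite := (Set.finite_le_nat G.edgeFinset.card).subset
    fun n ⟨_, _, _, hp, _, hn⟩ => hn ▸ hp.length_le_card_edgeFinset
  obtain ⟨_, ⟨a, b, p, hp, hu, rfl⟩, hmax⟩ :=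
    hs.exists_maximal ⟨0, u, u, .nil, by simp, by simp, rfl⟩
  refine ⟨a, b, p, hp, hu, fun a' b' q hq hqu => ?_⟩
  have := hmax ⟨a', b', q, hq, hqu, rfl⟩
  lia

-- A longest trail through `u` is closed, as a trail with distinct ends misses an edge at its start
-- (parity); and it uses every edge, as otherwise a rotation of it extends by an unused edge.
theorem exists_isEulerian [DecidableEq V] [Finite G.edgeSet]
    (heven : ∀ v, Even (G.neighborSet v).ncard) (u : V)
    (hu : ∀ v w, G.Adj v w → G.Reachable u v) : ∃ p : G.Walk u u, p.IsEulerian := by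
  obtain ⟨a, b, p, hp, hup, hmax⟩ := G.exists_isTrail_forall_length_le_of_mem_support u
  obtain rfl : a = b := by
    by_contra hab
    obtain ⟨w, hw, hwp⟩ := hp.exists_adj_notMem_edges hab (heven a)
    have := hmax _ _ (.cons hw p) ((Walk.isTrail_cons _ _).2 ⟨hp, hwp⟩) (by simp [hup])
    simp at this
  refine ⟨p.rotate u hup, (hp.rotate hup).isEulerian_of_forall_mem fun e he => ?_⟩
  rw [(p.rotate_edges u hup).perm.mem_iff]
  by_contra hep
  induction e using Sym2.ind with | _ x y
  obtain ⟨z, hz, w, hw, hwp⟩ := p.exists_adj_notMem_edges_of_reachable hup (hu x y he) he hep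
  have := hmax _ _ (.cons hw (p.rotate z hz))
    ((Walk.isTrail_cons _ _).2 ⟨hp.rotate hz, by rwa [(p.rotate_edges z hz).perm.mem_iff]⟩)
    (by simp [hup])
  simp at this

namespace Walk

variable [DecidableEq V] (r : Sym2 V → V)

/-- The edges of the walk in order, each `f ∈ l` being inserted when the walk first visits `r f`. -/
def edgesWithPendants : {u v : V} → G.Walk u v → List (Sym2 V) → List (Sym2 V)
  | u, _, .nil, l => l.filter (r · = u)
  | u, _, .cons (v := y) _ q, l =>
    l.filter (r · = u) ++ s(u, y) :: q.edgesWithPendants (l.filter (r · ≠ u))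

variable {r}

lemma mem_edgesWithPendants {u v : V} (w : G.Walk u v) (l : List (Sym2 V)) (f : Sym2 V) :
    f ∈ w.edgesWithPendants r l ↔ f ∈ w.edges ∨ f ∈ l ∧ r f ∈ w.support := by
  induction w generalizing l with
  | nil => simp [edgesWithPendants]
  | cons h q ih =>
    simp only [edgesWithPendants, List.mem_append, List.mem_filter, List.mem_cons, ih, edges_cons,
      support_cons]
    grind

lemma nodup_edgesWithPendants {u v : V} {w : G.Walk u v} (hw : w.IsTrail) {l : List (Sym2 V)}
    (hl : l.Nodup) (hdisj : ∀ f ∈ l, f ∉ w.edges) : (w.edgesWithPendants r l).Nodup := by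
  induction w generalizing l with
  | nil => exact hl.filter _
  | @cons u y _ h q ih =>
    rw [isTrail_cons] at hw
    have hq := ih hw.1 (l := l.filter (r · ≠ u)) (hl.filter _)
      fun f hf hfq => hdisj f (List.mem_of_mem_filter hf) (by simp [hfq])
    simp only [edgesWithPendants, List.nodup_append, List.nodup_cons, mem_edgesWithPendants]
    simp only [edges_cons, List.mem_cons, not_or] at hdisj
    clear ih
    refine ⟨hl.filter _, ⟨?_, hq⟩, ?_⟩
    · grind
    · grind [mem_edgesWithPendants]

-- The loops `s(u, u)` and `s(v, v)` at the ends record that the list starts with an edge at `u`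
-- and ends with an edge at `v`.
lemma isChain_edgesWithPendants {u v : V} (w : G.Walk u v) {l : List (Sym2 V)}
    (hr : ∀ f ∈ l, r f ∈ f) :
    (s(u, u) :: w.edgesWithPendants r l ++ [s(v, v)]).IsChain Sym2.Meets := by
  induction w generalizing l with
  | @nil u =>
    refine Sym2.isChain_meets_of_forall_mem (v := u) fun f hf => ?_
    simp only [edgesWithPendants, List.cons_append, List.mem_cons, List.mem_append,
      List.mem_filter] at hf
    grind
  | @cons u y w h q ih =>
    have hq := List.isChain_cons.1
      (ih (l := l.filter (r · ≠ u)) fun f hf => hr f (List.mem_of_mem_filter hf))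
    rw [edgesWithPendants, show ∀ A B : List (Sym2 V), s(u, u) :: (A ++ s(u, y) :: B) ++ [s(w, w)] =
      (s(u, u) :: A ++ [s(u, y)]) ++ (B ++ [s(w, w)]) by simp, List.isChain_append]
    refine ⟨Sym2.isChain_meets_of_forall_mem (v := u) fun f hf => ?_, hq.2, fun x hx z hz => ?_⟩
    · simp only [List.cons_append, List.mem_cons, List.mem_append, List.mem_filter] at hf
      grind
    · obtain ⟨_, hy, hyz⟩ := hq.1 z hz
      rw [Sym2.mem_iff, or_self] at hy
      subst hy
      simp only [List.getLast?_append, List.getLast?_singleton, Option.some_or, Option.mem_def,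
        Option.some.injEq] at hx
      exact ⟨_, hx ▸ Sym2.mem_mk_right u _, hyz⟩

end Walk

theorem exists_isCycle_of_isChain {l : List β} (hl : l.Nodup) (h3 : 3 ≤ l.length)
    (hchain : l.IsChain Γ.Adj) (hne : l ≠ []) (hclose : Γ.Adj (l.getLast hne) (l.head hne)) :
    ∃ C : Γ.Walk (l.getLast hne) (l.getLast hne), C.IsCycle ∧ ∀ x, x ∈ C.support ↔ x ∈ l := by
  set p := Walk.ofSupport l hne hchain
  have hp : p.IsPath := .mk' (by rwa [Walk.support_ofSupport])
  refine ⟨.cons hclose p, (Walk.cons_isCycle_iff p hclose).2 ⟨hp, fun he => ?_⟩, fun x => ?_⟩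
  · have := hp.length_eq_one_of_mem_edges (Sym2.eq_swap ▸ he)
    simp only [p, Walk.length_ofSupport] at this
    omega
  · simpa [p] using fun hx => hx ▸ l.getLast_mem hne

theorem exists_isCycle_lineGraph {l : List (Sym2 V)} (hl : l.Nodup) (h3 : 3 ≤ l.length)
    (hG : ∀ e ∈ l, e ∈ G.edgeSet) {c : V}
    (hchain : (s(c, c) :: l ++ [s(c, c)]).IsChain Sym2.Meets) :
    ∃ (a : G.edgeSet) (C : G.lineGraph.Walk a a), C.IsCycle ∧
      ∀ f : G.edgeSet, f ∈ C.support ↔ (f : Sym2 V) ∈ l := by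
  have hne : l ≠ [] := by rintro rfl; simp at h3
  have hhead : c ∈ l.head hne := by
    obtain ⟨e, t, rfl⟩ := List.exists_cons_of_ne_nil hne
    simp_all [Sym2.Meets]
  have hlast : c ∈ l.getLast hne := by
    obtain ⟨t, e, rfl⟩ := (List.eq_nil_or_concat l).resolve_left hne
    simp_all [Sym2.Meets]
  have hdist : l.getLast hne ≠ l.head hne := by
    obtain ⟨e, t, rfl⟩ := List.exists_cons_of_ne_nil hne
    have ht : t ≠ [] := by rintro rfl; simp at h3
    rw [List.getLast_cons ht, List.head_cons]
    exact fun h => (List.nodup_cons.1 hl).1 (h ▸ t.getLast_mem ht)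
  set L := l.pmap Subtype.mk hG
  have hneL : L ≠ [] := by simpa [L]
  have hheadL : (L.head hneL : Sym2 V) = l.head hne := by simp [L, List.head_pmap]
  have hlastL : (L.getLast hneL : Sym2 V) = l.getLast hne := by simp [L, List.getLast_pmap]
  have hchainL : L.IsChain G.lineGraph.Adj :=
    List.isChain_pmap_of_isChain (fun _ _ _ _ h => lineGraph_adj_iff_exists.2
      ⟨fun h' => h.1 (congrArg Subtype.val h'), h.2⟩)
      ((hchain.infix ⟨[s(c, c)], [s(c, c)], rfl⟩).and_ne hl) hG
  have hclose : G.lineGraph.Adj (L.getLast hneL) (L.head hneL) := lineGraph_adj_iff_exists.2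
    ⟨fun h => hdist (hlastL ▸ hheadL ▸ congrArg Subtype.val h), c, hlastL ▸ hlast, hheadL ▸ hhead⟩
  obtain ⟨C, hC, hsupp⟩ := exists_isCycle_of_isChain
    (hl.pmap fun _ _ _ _ => congrArg Subtype.val) (by simpa [L]) hchainL hneL hclose
  refine ⟨_, C, hC, fun f => ?_⟩
  simp only [hsupp, List.mem_pmap]
  exact ⟨fun ⟨_, h, hf⟩ => hf ▸ h, fun h => ⟨f, h, rfl⟩⟩

end SimpleGraph

namespace Paper

section

variable {V : Type*} {G : SimpleGraph V} {H : G.Subgraph}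

lemma edgeSet_subset_barE : H.edgeSet ⊆ barE G H := by
  intro e he
  refine ⟨H.edgeSet_subset he, ?_⟩
  induction e using Sym2.ind with | _ a b => exact ⟨a, H.edge_vert he, Sym2.mem_mk_left a b⟩

theorem IsCircuit.exists_isEulerian [DecidableEq V] (hH : IsCircuit H) (hfin : H.edgeSet.Finite) :
    ∃ c ∈ H.verts, ∃ w : H.spanningCoe.Walk c c, w.IsEulerian ∧ ∀ v ∈ H.verts, v ∈ w.support := by
  obtain ⟨hconn, heven⟩ := hH
  obtain ⟨c, hc⟩ := hconn.nonempty
  have : Finite H.spanningCoe.edgeSet := hfin.to_subtype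
  have hreach : ∀ v ∈ H.verts, H.spanningCoe.Reachable c v := fun v hv =>
    (hconn.preconnected ⟨c, hc⟩ ⟨v, hv⟩).map H.coeEmbeddingSpanningCoe.toHom
  obtain ⟨w, hw⟩ :=
    SimpleGraph.exists_isEulerian heven c fun v x hvx => hreach v (H.edge_vert hvx)
  refine ⟨c, hc, w, hw, fun v hv => ?_⟩
  obtain rfl | hvc := eq_or_ne v c
  · exact w.start_mem_support
  obtain ⟨q⟩ := (hreach v hv).symm
  cases q with
  | nil => exact absurd rfl hvc
  | cons h _ => exact w.fst_mem_support_of_mem_edges (hw.mem_edges_iff.mpr h)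

theorem IsCircuit.exists_closed_chain_barE (hH : IsCircuit H) (hfin : (barE G H).Finite) :
    ∃ (c : V) (l : List (Sym2 V)), l.Nodup ∧ (∀ f, f ∈ l ↔ f ∈ barE G H) ∧
      (s(c, c) :: l ++ [s(c, c)]).IsChain Sym2.Meets := by
  classical
  obtain ⟨c, hc, w, hw, hverts⟩ := hH.exists_isEulerian (hfin.subset edgeSet_subset_barE)
  have : Nonempty V := ⟨c⟩
  let r : Sym2 V → V := fun f => Classical.epsilon fun v => v ∈ H.verts ∧ v ∈ f
  have hr : ∀ f ∈ barE G H, r f ∈ H.verts ∧ r f ∈ f := fun f hf => Classical.epsilon_spec hf.2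
  let pend := (hfin.sdiff (t := H.edgeSet)).toFinset.toList
  have hpend : ∀ f, f ∈ pend ↔ f ∈ barE G H ∧ f ∉ H.edgeSet := by simp [pend]
  refine ⟨c, w.edgesWithPendants r pend,
    Walk.nodup_edgesWithPendants hw.isTrail (Finset.nodup_toList _) fun f hf hfw => ?_,
    fun f => ?_, w.isChain_edgesWithPendants fun f hf => (hr f ((hpend f).1 hf).1).2⟩
  · exact ((hpend f).1 hf).2 (hw.mem_edges_iff.1 hfw)
  · rw [Walk.mem_edgesWithPendants, hw.mem_edges_iff, hpend]
    constructor
    · rintro (h | ⟨⟨h, -⟩, -⟩)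
      exacts [edgeSet_subset_barE h, h]
    · intro h
      by_cases hfH : f ∈ H.edgeSet
      · exact .inl hfH
      · exact .inr ⟨⟨h, hfH⟩, hverts _ (hr f h).1⟩

end

/-- If `G` has a circuit `H` with `|Ē(H)| ≥ 3`, then `L(G)` has a cycle `C` with
`V(C) = Ē(H)`. -/
theorem stmt5 {V : Type*} (G : SimpleGraph V) (H : G.Subgraph)
    (hH : IsCircuit H) (h3 : 3 ≤ (barE G H).ncard) :
    ∃ (a : G.edgeSet) (C : G.lineGraph.Walk a a), C.IsCycle ∧
      ∀ f : G.edgeSet, f ∈ C.support ↔ (f : Sym2 V) ∈ barE G H := by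
  classical
  obtain ⟨c, l, hl, hmem, hchain⟩ :=
    hH.exists_closed_chain_barE (Set.finite_of_ncard_pos (by omega))
  have hlen : l.length = (barE G H).ncard := by
    rw [← List.toFinset_card_of_nodup hl, ← Set.ncard_coe_finset]
    congr
    ext f
    simp [hmem]
  obtain ⟨a, C, hC, hsupp⟩ :=
    exists_isCycle_lineGraph hl (hlen ▸ h3) (fun e he => ((hmem e).1 he).1) hchain
  exact ⟨a, C, hC, fun f => (hsupp f).trans (hmem f)⟩
end Paper
end

section
/- If P is a nontrivial path in the line graph L(G) of a connected graph G, then G has a trail T such that L(G[Ē(T)]) contains P as a subgraph and every edge of T (as a vertex of L(G)) lies on P. -/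
open SimpleGraph

namespace Paper

lemma aux7 {V : Type*} (G : SimpleGraph V) :
    ∀ {a b : G.edgeSet} (P : G.lineGraph.Walk a b), P.support.Nodup →
    ∃ (u v : V) (T : G.Walk u v), T.IsTrail ∧ u ∈ (a : Sym2 V) ∧
      (∀ f ∈ P.support, ∃ w ∈ T.support, w ∈ (f : Sym2 V)) ∧
      (∀ e ∈ T.edges, ∃ f ∈ P.support.tail, (f : Sym2 V) = e) := by
  intro a b P
  induction P with
  | nil =>
    rename_i e
    intro _
    obtain ⟨⟨u, v⟩, hu⟩ := Quot.exists_rep (e : Sym2 V)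
    refine ⟨u, u, Walk.nil, Walk.IsTrail.nil, ?_, ?_, ?_⟩
    · rw [← hu]; exact Sym2.mem_mk_left u v
    · intro f hf
      simp only [Walk.support_nil, List.mem_singleton] at hf ⊢
      refine ⟨u, rfl, ?_⟩
      subst hf; rw [← hu]; exact Sym2.mem_mk_left u v
    · intro e' he; simp at he
  | cons h P' ih =>
    rename_i e₀ e₁ eb
    intro hnd
    rw [Walk.support_cons, List.nodup_cons] at hnd
    obtain ⟨hna, hnd'⟩ := hnd
    obtain ⟨u, v, T, hT, hu, hcov, hed⟩ := ih hnd'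
    rw [lineGraph_adj_iff_exists] at h
    obtain ⟨hne, w, hw0, hw1⟩ := h
    by_cases hwu : w = u
    · refine ⟨u, v, T, hT, hwu ▸ hw0, ?_, ?_⟩
      · intro f hf
        rw [Walk.support_cons, List.mem_cons] at hf
        rcases hf with rfl | hf
        · exact ⟨u, T.start_mem_support, hwu ▸ hw0⟩
        · exact hcov f hf
      · intro e he
        obtain ⟨f, hf, hfe⟩ := hed e he
        exact ⟨f, by rw [Walk.support_cons]; exact List.mem_of_mem_tail hf, hfe⟩
    · have he₁ : (e₁ : Sym2 V) = s(w, u) :=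
        ((Sym2.mem_and_mem_iff hwu).mp ⟨hw1, hu⟩)
      have hadj : G.Adj w u := by
        rw [← SimpleGraph.mem_edgeSet, ← he₁]; exact e₁.2
      have hnotmem : s(w, u) ∉ T.edges := by
        intro hmem
        obtain ⟨f, hf, hfe⟩ := hed _ hmem
        have hfeq : f = e₁ := Subtype.ext (by rw [hfe, he₁])
        subst hfeq
        rw [P'.support_eq_cons] at hnd'
        exact (List.nodup_cons.mp hnd').1 (by rwa [P'.support_eq_cons, List.tail_cons] at hf)
      refine ⟨w, v, Walk.cons hadj T, ?_, hw0, ?_, ?_⟩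
      · exact ⟨by rw [Walk.edges_cons, List.nodup_cons]; exact ⟨hnotmem, hT.edges_nodup⟩⟩
      · intro f hf
        rw [Walk.support_cons, List.mem_cons] at hf
        rcases hf with rfl | hf
        · exact ⟨w, Walk.start_mem_support _, hw0⟩
        · obtain ⟨x, hx, hxf⟩ := hcov f hf
          exact ⟨x, by rw [Walk.support_cons]; exact List.mem_cons_of_mem _ hx, hxf⟩
      · intro e he
        rw [Walk.edges_cons, List.mem_cons] at he
        rcases he with rfl | he
        · exact ⟨e₁, by rw [Walk.support_cons, List.tail_cons]; exact P'.start_mem_support, he₁⟩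
        · obtain ⟨f, hf, hfe⟩ := hed e he
          exact ⟨f, by rw [Walk.support_cons, List.tail_cons]; exact List.mem_of_mem_tail hf, hfe⟩

/-- If `P` is a nontrivial path of `L(G)`, then `G` has a trail `T` such that
`L(G[Ē(T)])` contains `P` and `P` contains all elements of `E(T)`. -/
theorem stmt7 {V : Type*} (G : SimpleGraph V) (hG : G.Connected)
    {a b : G.edgeSet} (P : G.lineGraph.Walk a b) (hP : P.IsPath) (hnt : 0 < P.length) :
    ∃ (u v : V) (T : G.Walk u v), T.IsTrail ∧
      (∀ f ∈ P.support, ∃ w ∈ T.support, w ∈ (f : Sym2 V)) ∧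
      (∀ e ∈ T.edges, ∃ f ∈ P.support, (f : Sym2 V) = e) := by
  obtain ⟨u, v, T, hT, _, hcov, hed⟩ := aux7 G P hP.support_nodup
  refine ⟨u, v, T, hT, hcov, fun e he => ?_⟩
  obtain ⟨f, hf, hfe⟩ := hed e he
  exact ⟨f, List.mem_of_mem_tail hf, hfe⟩
end Paper
end
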